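/- Let J̃ : V → V be a self-adjoint linear operator. If ⟨J̃v, v⟩ ≥ 0 for every v with 𝕁(v) = 0, then there exists a ∈ ℝ such that ⟨J̃v, v⟩ ≥ a·𝕁(v) for all v ∈ V. If moreover ⟨J̃v, v⟩ > 0 for every nonzero v with 𝕁(v) = 0, then there exists a ∈ ℝ such that ⟨J̃v, v⟩ > a·𝕁(v) for all nonzero v ∈ V. -/

import Mathlib

/-!
This is Finsler's lemma for the quadratic forms `Q v = ⟪J v, v⟫` and `P v = ⟪J̃ v, v⟫`. Let
`Q v > 0 > Q w`. The line `r ↦ v + r • w` meets the null cone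
`Q = 0` at parameters `s < 0 < t`, where `P ≥ 0`; since
`r ↦ P (v + r • w) * Q w - Q (v + r • w) * P w` is affine in `r`, it is then nonpositive at `0`,
i.e. `P w / Q w ≤ P v / Q v`. Hence the supremum of `P / Q` over `Q < 0` is at most its infimum
over `Q > 0`, and `a` can be taken to be that supremum. For the strict inequality, compactness of
the unit sphere gives `P ≥ ε ‖·‖²` on the null cone for some `ε > 0`, and the first part applies
to `P - ε ‖·‖²`.
-/

open scoped RealInnerProductSpace

theorem exists_root_neg_and_root_pos {c b a : ℝ} (hc : 0 < c) (ha : a < 0) :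
    ∃ s < 0, ∃ t > 0, c + s * b + s ^ 2 * a = 0 ∧ c + t * b + t ^ 2 * a = 0 := by
  set d := √(b ^ 2 - 4 * a * c)
  have hd : d ^ 2 = b ^ 2 - 4 * a * c := Real.sq_sqrt (by nlinarith [sq_nonneg b])
  have hbd : |b| < d := abs_lt_of_sq_lt_sq (by nlinarith) (Real.sqrt_nonneg _)
  have ha₀ : a ≠ 0 := ha.ne
  obtain ⟨hb₁, hb₂⟩ := abs_lt.mp hbd
  refine ⟨(-b + d) / (2 * a), div_neg_of_pos_of_neg (by linarith) (by linarith),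
    (-b - d) / (2 * a), div_pos_of_neg_of_neg (by linarith) (by linarith), ?_, ?_⟩ <;>
  · field_simp
    linear_combination hd

namespace QuadraticMap

variable {M : Type*} [AddCommGroup M] [Module ℝ M]

theorem map_add_smul (Q : QuadraticMap ℝ M ℝ) (v w : M) (t : ℝ) :
    Q (v + t • w) = Q v + t * polar Q v w + t ^ 2 * Q w := by
  have h := polar_smul_right (Q := Q) t v w
  rw [polar, QuadraticMap.map_smul] at h
  simp only [smul_eq_mul] at h
  linear_combination h

theorem mul_le_mul_of_nonneg_on_null (Q P : QuadraticMap ℝ M ℝ) (hP : ∀ v, Q v = 0 → 0 ≤ P v)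
    {v w : M} (hv : 0 < Q v) (hw : Q w < 0) :
    P v * Q w ≤ P w * Q v := by
  obtain ⟨s, hs, t, ht, hQs, hQt⟩ := exists_root_neg_and_root_pos (b := polar Q v w) hv hw
  have hPs := hP (v + s • w) (by rwa [map_add_smul])
  have hPt := hP (v + t • w) (by rwa [map_add_smul])
  rw [map_add_smul] at hPs hPt
  set β := polar P v w * Q w - polar Q v w * P w
  have h₁ : P v * Q w - P w * Q v + s * β ≤ 0 := by
    linear_combination (mul_nonpos_of_nonneg_of_nonpos hPs hw.le) - P w * hQs
  have h₂ : P v * Q w - P w * Q v + t * β ≤ 0 := by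
    linear_combination (mul_nonpos_of_nonneg_of_nonpos hPt hw.le) - P w * hQt
  rcases le_total β 0 with hβ | hβ <;> nlinarith

theorem exists_mul_le_of_nonneg_on_null (Q P : QuadraticMap ℝ M ℝ) (hpos : ∃ v, 0 < Q v)
    (hneg : ∃ w, Q w < 0) (hP : ∀ v, Q v = 0 → 0 ≤ P v) :
    ∃ a : ℝ, ∀ v, a * Q v ≤ P v := by
  obtain ⟨v₀, hv₀⟩ := hpos
  obtain ⟨w₀, hw₀⟩ := hneg
  set S := (fun w => P w / Q w) '' {w | Q w < 0}
  have hS : ∀ v, 0 < Q v → ∀ x ∈ S, x ≤ P v / Q v := by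
    rintro v hv _ ⟨w, hw, rfl⟩
    rw [div_le_iff_of_neg hw, div_mul_eq_mul_div, div_le_iff₀ hv]
    exact mul_le_mul_of_nonneg_on_null Q P hP hv hw
  refine ⟨sSup S, fun v => ?_⟩
  rcases lt_trichotomy (Q v) 0 with hv | hv | hv
  · rw [← div_le_iff_of_neg hv]
    exact le_csSup ⟨_, hS v₀ hv₀⟩ ⟨v, hv, rfl⟩
  · simpa [hv] using hP v hv
  · rw [← le_div_iff₀ hv]
    exact csSup_le ⟨_, w₀, hw₀, rfl⟩ (hS v hv)

section FiniteDimensional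

variable {E : Type*} [NormedAddCommGroup E] [NormedSpace ℝ E] [FiniteDimensional ℝ E]

theorem exists_pos_mul_sq_norm_le_of_pos_on_null (Q P : QuadraticMap ℝ E ℝ) (hQ : Continuous Q)
    (hP : Continuous P) (hPQ : ∀ v ≠ 0, Q v = 0 → 0 < P v) :
    ∃ ε > 0, ∀ v, Q v = 0 → ε * ‖v‖ ^ 2 ≤ P v := by
  have hK : IsCompact (Metric.sphere (0 : E) 1 ∩ {v | Q v = 0}) :=
    (isCompact_sphere 0 1).inter_right (isClosed_eq hQ continuous_const)
  obtain ⟨ε, hε, hεK⟩ := hK.exists_forall_le' hP.continuousOn fun u hu =>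
    hPQ u (ne_zero_of_mem_unit_sphere ⟨u, hu.1⟩) hu.2
  refine ⟨ε, hε, fun v hv => ?_⟩
  rcases eq_or_ne v 0 with rfl | hv₀
  · simp
  have hnorm : 0 < ‖v‖ := norm_pos_iff.mpr hv₀
  have hu := hεK (‖v‖⁻¹ • v) ⟨by simp [norm_smul, hnorm.ne'], by simp [QuadraticMap.map_smul, hv]⟩
  rw [QuadraticMap.map_smul, smul_eq_mul] at hu
  calc ε * ‖v‖ ^ 2 ≤ ‖v‖⁻¹ * ‖v‖⁻¹ * P v * ‖v‖ ^ 2 := by gcongr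
    _ = P v := by field_simp

end FiniteDimensional

end QuadraticMap

namespace LinearMap

variable {F : Type*} [NormedAddCommGroup F] [InnerProductSpace ℝ F]

noncomputable def innerQuadraticMap (T : F →ₗ[ℝ] F) : QuadraticMap ℝ F ℝ :=
  LinearMap.BilinMap.toQuadraticMap ((innerₗ F).compl₁₂ T LinearMap.id)

@[simp]
theorem innerQuadraticMap_apply (T : F →ₗ[ℝ] F) (v : F) : T.innerQuadraticMap v = ⟪T v, v⟫ :=
  rfl

theorem continuous_innerQuadraticMap [FiniteDimensional ℝ F] (T : F →ₗ[ℝ] F) :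
    Continuous T.innerQuadraticMap :=
  T.continuous_of_finiteDimensional.inner continuous_id

end LinearMap

namespace QuadraticMap

variable {F : Type*} [NormedAddCommGroup F] [InnerProductSpace ℝ F] [FiniteDimensional ℝ F]

theorem exists_mul_lt_of_pos_on_null (Q P : QuadraticMap ℝ F ℝ) (hQ : Continuous Q)
    (hP : Continuous P) (hpos : ∃ v, 0 < Q v) (hneg : ∃ w, Q w < 0)
    (hPQ : ∀ v ≠ 0, Q v = 0 → 0 < P v) :
    ∃ a : ℝ, ∀ v ≠ 0, a * Q v < P v := by
  obtain ⟨ε, hε, hεP⟩ := exists_pos_mul_sq_norm_le_of_pos_on_null Q P hQ hP hPQ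
  set P' := P - ε • (LinearMap.id : F →ₗ[ℝ] F).innerQuadraticMap
  have hP' : ∀ v, P' v = P v - ε * ‖v‖ ^ 2 := by simp [P']
  obtain ⟨a, ha⟩ := exists_mul_le_of_nonneg_on_null Q P' hpos hneg fun v hv => by
    linarith [hP' v, hεP v hv]
  refine ⟨a, fun v hv => ?_⟩
  have : 0 < ε * ‖v‖ ^ 2 := by positivity
  linarith [ha v, hP' v]

end QuadraticMap

theorem stmt_2_general {n : ℕ}
    (J : EuclideanSpace ℝ (Fin n) →ₗ[ℝ] EuclideanSpace ℝ (Fin n))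
    (hindefpos : ∃ v : EuclideanSpace ℝ (Fin n), 0 < ⟪J v, v⟫)
    (hindefneg : ∃ w : EuclideanSpace ℝ (Fin n), ⟪J w, w⟫ < 0)
    (Jt : EuclideanSpace ℝ (Fin n) →ₗ[ℝ] EuclideanSpace ℝ (Fin n)) :
    ((∀ v : EuclideanSpace ℝ (Fin n), ⟪J v, v⟫ = 0 → 0 ≤ ⟪Jt v, v⟫) →
      ∃ a : ℝ, ∀ v : EuclideanSpace ℝ (Fin n), a * ⟪J v, v⟫ ≤ ⟪Jt v, v⟫) ∧
    ((∀ v : EuclideanSpace ℝ (Fin n), v ≠ 0 → ⟪J v, v⟫ = 0 → 0 < ⟪Jt v, v⟫) →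
      ∃ a : ℝ, ∀ v : EuclideanSpace ℝ (Fin n), v ≠ 0 → a * ⟪J v, v⟫ < ⟪Jt v, v⟫) :=
  ⟨J.innerQuadraticMap.exists_mul_le_of_nonneg_on_null Jt.innerQuadraticMap hindefpos hindefneg,
    J.innerQuadraticMap.exists_mul_lt_of_pos_on_null Jt.innerQuadraticMap
      J.continuous_innerQuadraticMap Jt.continuous_innerQuadraticMap hindefpos hindefneg⟩

/-- Let `V = ℝⁿ` (`n ≥ 2`) carry a non-degenerate indefinite quadratic form
`𝕁 v := ⟪J v, v⟫` given by an invertible self-adjoint operator `J`, and let `J̃` be a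
self-adjoint operator. If `⟪J̃ v, v⟫ ≥ 0` whenever `𝕁 v = 0`, then there is `a ∈ ℝ` with
`⟪J̃ v, v⟫ ≥ a·𝕁(v)` for all `v`; if moreover `⟪J̃ v, v⟫ > 0` for all nonzero `v` with
`𝕁 v = 0`, then there is `a ∈ ℝ` with `⟪J̃ v, v⟫ > a·𝕁(v)` for all nonzero `v`. -/
theorem stmt_2 {n : ℕ} (hn : 2 ≤ n)
    (J : EuclideanSpace ℝ (Fin n) →ₗ[ℝ] EuclideanSpace ℝ (Fin n))
    (hJinv : Function.Bijective J)
    (hJsa : ∀ v w : EuclideanSpace ℝ (Fin n), ⟪J v, w⟫ = ⟪v, J w⟫)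
    (hindefpos : ∃ v : EuclideanSpace ℝ (Fin n), 0 < ⟪J v, v⟫)
    (hindefneg : ∃ w : EuclideanSpace ℝ (Fin n), ⟪J w, w⟫ < 0)
    (Jt : EuclideanSpace ℝ (Fin n) →ₗ[ℝ] EuclideanSpace ℝ (Fin n))
    (hJtsa : ∀ v w : EuclideanSpace ℝ (Fin n), ⟪Jt v, w⟫ = ⟪v, Jt w⟫) :
    ((∀ v : EuclideanSpace ℝ (Fin n), ⟪J v, v⟫ = 0 → 0 ≤ ⟪Jt v, v⟫) →
      ∃ a : ℝ, ∀ v : EuclideanSpace ℝ (Fin n), a * ⟪J v, v⟫ ≤ ⟪Jt v, v⟫) ∧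
    ((∀ v : EuclideanSpace ℝ (Fin n), v ≠ 0 → ⟪J v, v⟫ = 0 → 0 < ⟪Jt v, v⟫) →
      ∃ a : ℝ, ∀ v : EuclideanSpace ℝ (Fin n), v ≠ 0 → a * ⟪J v, v⟫ < ⟪Jt v, v⟫) :=
  stmt_2_general J hindefpos hindefneg Jt
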